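/- For each integer k ≥ 2, let π(k) be the PageRank vector of Γ(k) for α = 1 − 1/k, and let σ(k) be the PageRank vector of Γ(k) for α = 1 (the vector with σ(k)_A = 1 and all other entries 0). Then the supremum norm ‖σ(k) − π(k)‖_∞ converges to 1 as k → ∞. -/

import Mathlib

/-- Arc relation of the graph `Γ(k)` on vertex indices `0, ..., k+2`, where
vertex `0` is `C1`, vertex `1` is `C2`, vertex `i+1` is `B_i` for `1 ≤ i ≤ k`,
and vertex `k+2` is `A`.  `PRadj k j i` holds iff there is an arc from `j` to `i`. -/
def PRadj (k j i : ℕ) : Prop :=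
  (j = 0 ∧ (i = 0 ∨ i = 1)) ∨
  (j = 1 ∧ (i = 0 ∨ i = 1 ∨ i = 2)) ∨
  (2 ≤ j ∧ j ≤ k + 1 ∧ (i = 0 ∨ i = 1 ∨ i = j + 1)) ∨
  (j = k + 2 ∧ i = k + 2)

instance (k j i : ℕ) : Decidable (PRadj k j i) := by unfold PRadj; infer_instance

/-- Out-degree of vertex `j` in `Γ(k)`:  `deg(C1) = 2`, `deg(A) = 1`, all others `3`. -/
def PRdeg (k j : ℕ) : ℕ := if j = 0 then 2 else if j = k + 2 then 1 else 3

/-- The PageRank matrix `R_α` of `Γ(k)`:  entry `(i, j)` is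
`α / deg(j) + (1 - α)/(k+3)` if there is an arc from `j` to `i`, and `(1 - α)/(k+3)`
otherwise. -/
noncomputable def PRmat (k : ℕ) (α : ℝ) : Matrix (Fin (k + 3)) (Fin (k + 3)) ℝ :=
  fun i j =>
    if PRadj k j.1 i.1 then α / (PRdeg k j.1 : ℝ) + (1 - α) / ((k : ℝ) + 3)
    else (1 - α) / ((k : ℝ) + 3)

/-- `π` is a PageRank vector of `Γ(k)` for jumping parameter `α`:  it has nonnegative
entries summing to `1` and satisfies `R_α π = π`. -/
def IsPageRank (k : ℕ) (α : ℝ) (π : Fin (k + 3) → ℝ) : Prop :=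
  (∀ v, 0 ≤ π v) ∧ (∑ v, π v = 1) ∧ (PRmat k α).mulVec π = π


/-!
The sink `A` is fed only through the chain `C2 → B1 → ⋯ → Bk`, and each step of the chain
passes on at most a third of the mass, so `π(Bk) ≤ 3c/2 + 3⁻ᵏ`, where `c = (1 - α)/(k + 3)` is the
teleportation mass. The row of `A` reads `(1 - α) π(A) = c + (α/3) π(Bk)`; with `1 - α = 1/k`
this gives `π(A) ≤ 2/k + k 3⁻ᵏ → 0`. Hence `|σ(A) - π(A)| → 1`, while every `|σ v - π v| ≤ 1`.
-/

open Finset Filter Topology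

theorem le_div_one_sub_add_pow_mul {K : Type*} [Field K] [LinearOrder K] [IsStrictOrderedRing K]
    {x : ℕ → K} {c q : K} (hc : 0 ≤ c) (hq0 : 0 ≤ q) (hq1 : q < 1) {N : ℕ}
    (h : ∀ n < N, x (n + 1) ≤ c + q * x n) : x N ≤ c / (1 - q) + q ^ N * x 0 := by
  have hq : 0 < 1 - q := sub_pos.mpr hq1
  induction N with
  | zero => simpa using div_nonneg hc hq.le
  | succ N ih =>
    calc x (N + 1) ≤ c + q * x N := h N N.lt_succ_self
      _ ≤ c + q * (c / (1 - q) + q ^ N * x 0) := by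
        gcongr; exact ih fun n hn => h n (Nat.lt_succ_of_lt hn)
      _ = c / (1 - q) + q ^ (N + 1) * x 0 := by field_simp; ring

section PageRank

-- Vertices are addressed by their index `m < k + 3` through the cast `ℕ → Fin (k + 3)`.
open Fin.NatCast

variable {k : ℕ} {α : ℝ} {π : Fin (k + 3) → ℝ}

theorem PRmat_mulVec_apply (k : ℕ) (α : ℝ) (π : Fin (k + 3) → ℝ) (i : Fin (k + 3)) :
    (PRmat k α).mulVec π i = (1 - α) / ((k : ℝ) + 3) * ∑ j, π j
      + ∑ j, (if PRadj k j.1 i.1 then α / PRdeg k j.1 else 0) * π j := by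
  simp only [Matrix.mulVec, dotProduct, PRmat, mul_sum, ← sum_add_distrib]
  refine sum_congr rfl fun j _ => ?_
  split_ifs <;> ring

theorem PRdeg_of_pos_of_le {j : ℕ} (h1 : 1 ≤ j) (h2 : j ≤ k + 1) : PRdeg k j = 3 := by
  unfold PRdeg; split_ifs <;> omega

theorem PRdeg_last : PRdeg k (k + 2) = 1 := by
  simp [PRdeg]

theorem IsPageRank.le_one (h : IsPageRank k α π) (v : Fin (k + 3)) : π v ≤ 1 :=
  h.2.1 ▸ single_le_sum (fun w _ => h.1 w) (mem_univ v)

theorem IsPageRank.apply_eq (h : IsPageRank k α π) (i : Fin (k + 3)) :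
    π i = (1 - α) / ((k : ℝ) + 3)
      + ∑ j, (if PRadj k j.1 i.1 then α / PRdeg k j.1 else 0) * π j := by
  conv_lhs => rw [← h.2.2, PRmat_mulVec_apply, h.2.1, mul_one]

theorem IsPageRank.apply_succ_eq (h : IsPageRank k α π) {m : ℕ} (hm1 : 1 ≤ m) (hmk : m ≤ k) :
    π (m + 1 : ℕ) = (1 - α) / ((k : ℝ) + 3) + α / 3 * π m := by
  rw [h.apply_eq, Fintype.sum_eq_single (m : Fin (k + 3))]
  · rw [Fin.val_cast_of_lt (by omega), Fin.val_cast_of_lt (by omega),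
      if_pos (by unfold PRadj; omega), PRdeg_of_pos_of_le hm1 (by omega)]
    norm_num
  · intro j hj
    have hj' : j.val ≠ m := fun e => hj (by ext; rw [e, Fin.val_cast_of_lt (by omega)])
    rw [Fin.val_cast_of_lt (by omega), if_neg (by unfold PRadj; omega), zero_mul]

theorem IsPageRank.sub_mul_apply_last (h : IsPageRank k α π) (hk : 1 ≤ k) :
    (1 - α) * π (k + 2 : ℕ) = (1 - α) / ((k : ℝ) + 3) + α / 3 * π (k + 1 : ℕ) := by
  have hB : ((k + 1 : ℕ) : Fin (k + 3)).val = k + 1 := Fin.val_cast_of_lt (by omega)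
  have hA : ((k + 2 : ℕ) : Fin (k + 3)).val = k + 2 := Fin.val_cast_of_lt (by omega)
  have hrow := h.apply_eq (k + 2 : ℕ)
  rw [Fintype.sum_eq_add ((k + 1 : ℕ) : Fin (k + 3)) (k + 2 : ℕ) (fun e => by
    have := congrArg Fin.val e; rw [hA, hB] at this; omega)] at hrow
  · rw [hA, hB, if_pos (by unfold PRadj; omega), if_pos (by unfold PRadj; omega),
      PRdeg_of_pos_of_le (by omega) le_rfl, PRdeg_last] at hrow
    simp only [Nat.cast_one, Nat.cast_ofNat, div_one] at hrow
    linarith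
  · rintro j ⟨hjB, hjA⟩
    have hjB' : j.val ≠ k + 1 := fun e => hjB (Fin.ext (e.trans hB.symm))
    have hjA' : j.val ≠ k + 2 := fun e => hjA (Fin.ext (e.trans hA.symm))
    rw [hA, if_neg (by unfold PRadj; omega), zero_mul]

theorem IsPageRank.apply_last_le (hk : 2 ≤ k) (h : IsPageRank k (1 - 1 / k) π) :
    π (k + 2 : ℕ) ≤ 2 / k + k * (1 / 3) ^ k := by
  have hk0 : (0 : ℝ) < k := by positivity
  have hk2 : (2 : ℝ) ≤ k := by exact_mod_cast hk
  have hα : (1 : ℝ) - (1 - 1 / k) = 1 / k := by ring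
  have hα0 : (0 : ℝ) ≤ 1 - 1 / k := by
    rw [sub_nonneg, div_le_one hk0]; linarith
  have hα1 : (1 : ℝ) - 1 / k ≤ 1 := by
    rw [sub_le_self_iff]; positivity
  set c : ℝ := 1 / k / (k + 3) with hc_def
  have hc : 0 ≤ c := by positivity
  have hkc : k * c ≤ 1 / k := by
    rw [hc_def, mul_div_assoc', mul_one_div_cancel hk0.ne', one_div_le_one_div (by positivity) hk0]
    linarith
  have hchain : π (k + 1 : ℕ) ≤ c / (1 - 1 / 3) + (1 / 3) ^ k * π (1 : ℕ) := by
    refine le_div_one_sub_add_pow_mul (x := fun n => π (n + 1 : ℕ)) hc (by norm_num) (by norm_num)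
      fun n hn => ?_
    rw [h.apply_succ_eq (by omega) (by omega), hα]
    have hx : 0 ≤ π (n + 1 : ℕ) := h.1 _
    gcongr
  have hsink : π (k + 2 : ℕ) = k * c + k * ((1 - 1 / k) / 3 * π (k + 1 : ℕ)) := by
    have := h.sub_mul_apply_last (by omega)
    rw [hα] at this
    rw [hc_def, ← mul_add, ← this]
    field_simp
  have hB : 0 ≤ π (k + 1 : ℕ) := h.1 _
  calc π (k + 2 : ℕ) = k * c + k * ((1 - 1 / k) / 3 * π (k + 1 : ℕ)) := hsink
    _ ≤ k * c + k * (1 / 3 * (c / (1 - 1 / 3) + (1 / 3) ^ k * 1)) := by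
      gcongr
      exact hchain.trans (by gcongr; exact h.le_one _)
    _ = 3 / 2 * (k * c) + (1 / 3) * (k * (1 / 3) ^ k) := by ring
    _ ≤ 3 / 2 * (1 / k) + 1 * (k * (1 / 3) ^ k) := by gcongr; norm_num
    _ ≤ 2 / k + k * (1 / 3) ^ k := by
      rw [one_mul, mul_one_div]
      gcongr
      norm_num

end PageRank

/-- If `π k` is the PageRank vector of `Γ(k)` for `α = 1 - 1/k` and `σ k` is the
PageRank vector of `Γ(k)` for `α = 1` (value `1` at `A`, `0` elsewhere), then
`‖σ(k) - π(k)‖_∞ → 1` as `k → ∞`. -/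
theorem pagerank_diff_sup_norm_tendsto (π : ∀ k : ℕ, Fin (k + 3) → ℝ)
    (hπ : ∀ k, 2 ≤ k → IsPageRank k (1 - 1 / (k : ℝ)) (π k))
    (σ : ∀ k : ℕ, Fin (k + 3) → ℝ)
    (hσ : ∀ k, σ k = fun v => if v.1 = k + 2 then (1 : ℝ) else 0) :
    Filter.Tendsto (fun k : ℕ => ⨆ v : Fin (k + 3), |σ k v - π k v|)
      Filter.atTop (nhds 1) := by
  open Fin.NatCast in
  have hbound : Tendsto (fun k : ℕ => 1 - (2 / (k : ℝ) + k * (1 / 3) ^ k)) atTop (𝓝 1) := by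
    simpa using ((tendsto_const_div_atTop_nhds_zero_nat 2).add
      (tendsto_self_mul_const_pow_of_lt_one (r := 1 / 3) (by norm_num) (by norm_num))).const_sub 1
  refine tendsto_of_tendsto_of_tendsto_of_le_of_le' hbound tendsto_const_nhds ?_ ?_
  all_goals filter_upwards [eventually_ge_atTop 2] with k hk
  · have hA : ((k + 2 : ℕ) : Fin (k + 3)).val = k + 2 := Fin.val_cast_of_lt (by omega)
    calc 1 - (2 / (k : ℝ) + k * (1 / 3) ^ k) ≤ |σ k (k + 2 : ℕ) - π k (k + 2 : ℕ)| := by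
          simp only [hσ, if_pos hA]
          exact (sub_le_sub_left ((hπ k hk).apply_last_le hk) 1).trans (le_abs_self _)
      _ ≤ ⨆ v, |σ k v - π k v| :=
          le_ciSup (f := fun v => |σ k v - π k v|) (Set.finite_range _).bddAbove _
  · refine ciSup_le fun v => abs_sub_le_of_nonneg_of_le ?_ ?_ ((hπ k hk).1 v) ((hπ k hk).le_one v)
    all_goals simp only [hσ]; split_ifs <;> norm_num
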